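/- arXiv:2111.02490 — 2 statements merged into one kernel-verified Lean document; each statement's English description precedes it below -/
import Mathlib

section
/- Let 𝓕' ⊆ 𝓕 be families of subgroups of a group G, let K and M be cocomplete categories, F : K → M a functor, and C : BG → K a functor. If for every H ∈ 𝓕 the assembly map As_{𝓕'|_H, F(res^G_H C)_H} is an isomorphism, then the relative assembly map As^𝓕_{𝓕', FC_G} : colim_{G_{𝓕'}Orb} FC_G → colim_{G_𝓕Orb} FC_G, induced by the inclusion G_{𝓕'}Orb ⊆ G_𝓕Orb, is an isomorphism. -/
/-!
Statement 15: relative assembly maps are isomorphisms given assembly isomorphisms for the members of the larger family.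

Throughout, `GOrb G` is the orbit category of the group `G` (objects: nonempty transitive
`G`-sets; morphisms: equivariant maps), `GOrb.pt G` its terminal object `G/G`,
`SubgroupFamily G` the families of subgroups, `FamOrb G 𝓕` the full subcategory `G_𝓕Orb`,
`PSh G` the presheaf category, `asm` the assembly map, `jG : BG ⥤ GOrb` the canonical
inclusion (`BG = SingleObj G`), and left Kan extensions are encoded by a functor together
with a natural transformation exhibiting it as a left Kan extension
(`Functor.IsLeftKanExtension`).  Cocompleteness is expressed by `HasColimitsOfSize.{u, u+1}`,
the size of the orbit category and its subcategories.
-/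

open CategoryTheory Limits

universe u v w v' w'

namespace FJ

variable (G : Type u) [Group G]

/-- The orbit category of `G`: objects are (nonempty) transitive `G`-sets, morphisms are
`G`-equivariant maps. -/
structure GOrb : Type (u + 1) where
  α : Type u
  [act : MulAction G α]
  pretrans : MulAction.IsPretransitive G α
  nonempty : Nonempty α

attribute [instance] GOrb.act

variable {G}

/-- Equivariant maps of transitive `G`-sets. -/
@[ext]
structure OrbHom (X Y : GOrb G) : Type u where
  toFun : X.α → Y.α
  map_smul : ∀ (g : G) (x : X.α), toFun (g • x) = g • toFun x

instance : Category.{u} (GOrb G) where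
  Hom X Y := OrbHom X Y
  id X := ⟨_root_.id, fun _ _ => rfl⟩
  comp f g := ⟨g.toFun ∘ f.toFun, fun a x => by
    simp only [Function.comp_apply, f.map_smul, g.map_smul]⟩
  id_comp f := OrbHom.ext rfl
  comp_id f := OrbHom.ext rfl
  assoc f g h := OrbHom.ext rfl

variable (G)

/-- The one-point orbit `G/G`, the terminal object of the orbit category. -/
def GOrb.pt : GOrb G where
  α := PUnit
  pretrans := ⟨fun x y => ⟨1, Subsingleton.elim _ _⟩⟩
  nonempty := ⟨PUnit.unit⟩

variable {G}

/-- The unique morphism to the one-point orbit. -/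
def toPt (X : GOrb G) : X ⟶ GOrb.pt G :=
  ⟨fun _ => PUnit.unit, fun _ _ => rfl⟩

instance (X : GOrb G) : Subsingleton (X ⟶ GOrb.pt G) :=
  ⟨fun f g => OrbHom.ext (funext fun _ => rfl)⟩

variable (G)

/-- A family of subgroups of `G`: a nonempty collection of subgroups closed under conjugation
and under passing to subgroups. -/
structure SubgroupFamily where
  carrier : Set (Subgroup G)
  nonempty : carrier.Nonempty
  conj_mem : ∀ (H : Subgroup G) (g : G),
    H ∈ carrier → H.map (MulAut.conj g).toMonoidHom ∈ carrier
  le_mem : ∀ H K : Subgroup G, H ≤ K → K ∈ carrier → H ∈ carrier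

/-- The full subcategory `G_𝓕Orb` of orbits with stabilizers in the family `𝓕`. -/
abbrev FamOrb (𝓕 : SubgroupFamily G) : Type (u + 1) :=
  ObjectProperty.FullSubcategory (fun X : GOrb G => ∀ x : X.α, MulAction.stabilizer G x ∈ 𝓕.carrier)

/-- The category of `Set`-valued presheaves on the orbit category. -/
abbrev PSh := (GOrb G)ᵒᵖ ⥤ Type u

variable {G}

section Assembly

variable {M : Type v'} [Category.{w'} M]

/-- The cocone over `F` restricted to `G_𝓕Orb` with vertex `F(G/G)`. -/
def asmCocone (𝓕 : SubgroupFamily G) (F : GOrb G ⥤ M) :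
    Cocone (ObjectProperty.ι _ ⋙ F :
      FamOrb G 𝓕 ⥤ M) where
  pt := F.obj (GOrb.pt G)
  ι :=
    { app := fun X => F.map (toPt X.obj)
      naturality := fun X Y f => by
        dsimp
        rw [Category.comp_id, ← F.map_comp]
        exact congrArg F.map (Subsingleton.elim _ _) }

/-- The assembly map `colim_{G_𝓕Orb} F ⟶ F(G/G)`. -/
noncomputable def asm (𝓕 : SubgroupFamily G) (F : GOrb G ⥤ M)
    [HasColimit (ObjectProperty.ι _ ⋙ F : FamOrb G 𝓕 ⥤ M)] :
    colimit (ObjectProperty.ι _ ⋙ F : FamOrb G 𝓕 ⥤ M) ⟶ F.obj (GOrb.pt G) :=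
  colimit.desc _ (asmCocone 𝓕 F)

end Assembly

end FJ

namespace FJ

variable {G : Type u} [Group G]

variable (G) in
/-- The transitive `G`-set `G` (left translation). -/
@[reducible] def selfOrb : GOrb G where
  α := G
  pretrans := ⟨fun x y => ⟨y * x⁻¹, by simp [smul_eq_mul]⟩⟩
  nonempty := ⟨1⟩

/-- The group element underlying a morphism in `BG = SingleObj G`. -/
def un {x y : SingleObj G} (g : x ⟶ y) : G := g

variable (G) in
/-- Right multiplication by `g⁻¹`, as an equivariant self-map of the `G`-set `G`. -/
def rmul (g : G) : selfOrb G ⟶ selfOrb G :=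
  ⟨fun a => a * g⁻¹, fun h a => by simp [smul_eq_mul, mul_assoc]⟩

variable (G) in
/-- The canonical inclusion `j^G : BG ⟶ GOrb`, sending the unique object to the `G`-set `G`. -/
def jG : SingleObj G ⥤ GOrb G where
  obj _ := selfOrb G
  map g := rmul G (un g)
  map_id x := OrbHom.ext (funext fun a => by
    have h1 : un (𝟙 x) = 1 := rfl
    show a * (un (𝟙 x))⁻¹ = a
    rw [h1, inv_one, mul_one])
  map_comp {x y z} f g := OrbHom.ext (funext fun a => by
    have h1 : un (f ≫ g) = un g * un f := rfl
    show a * (un (f ≫ g))⁻¹ = (a * (un f)⁻¹) * (un g)⁻¹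
    rw [h1, mul_inv_rev, mul_assoc])

/-- The functor `Bφ : BH ⟶ BG` induced by a group homomorphism. -/
def Bhom {H : Type v} [Group H] (φ : H →* G) : SingleObj H ⥤ SingleObj G :=
  SingleObj.mapHom H G φ

/-- The family `φ*𝓕 = {K ≤ H ∣ φ(K) ∈ 𝓕}` induced by a group homomorphism. -/
def comapFam {H : Type v} [Group H] (φ : H →* G) (𝓕 : SubgroupFamily G) :
    SubgroupFamily H where
  carrier := {K : Subgroup H | K.map φ ∈ 𝓕.carrier}
  nonempty := by
    obtain ⟨S, hS⟩ := 𝓕.nonempty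
    refine ⟨⊥, ?_⟩
    have hbot : (⊥ : Subgroup H).map φ = ⊥ := by simp
    simp only [Set.mem_setOf_eq, hbot]
    exact 𝓕.le_mem ⊥ S bot_le hS
  conj_mem := fun K h hK => by
    simp only [Set.mem_setOf_eq]
    have heq : (K.map (MulAut.conj h).toMonoidHom).map φ =
        (K.map φ).map (MulAut.conj (φ h)).toMonoidHom := by
      rw [Subgroup.map_map, Subgroup.map_map]
      congr 1
      ext x
      simp [MulAut.conj]
    rw [heq]
    exact 𝓕.conj_mem _ (φ h) hK
  le_mem := fun K L h hL => 𝓕.le_mem _ _ (Subgroup.map_mono h) hL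

end FJ

namespace FJ

variable {G H : Type u} [Group G] [Group H]

/-- The relation defining `G ×_φ S`: `(g·φ(h), s) ∼ (g, h·s)`. -/
def indSetoid (φ : H →* G) (S : GOrb H) : Setoid (G × S.α) where
  r p q := ∃ h : H, p.1 = q.1 * φ h ∧ q.2 = h • p.2
  iseqv := by
    constructor
    · intro p
      exact ⟨1, by simp, by simp⟩
    · rintro p q ⟨h, h1, h2⟩
      refine ⟨h⁻¹, ?_, ?_⟩
      · rw [h1]; simp
      · rw [h2]; simp
    · rintro p q r ⟨h, h1, h2⟩ ⟨k, k1, k2⟩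
      refine ⟨k * h, ?_, ?_⟩
      · rw [h1, k1, map_mul, mul_assoc]
      · rw [k2, h2, mul_smul]

instance indAction (φ : H →* G) (S : GOrb H) : MulAction G (Quotient (indSetoid φ S)) where
  smul g := Quotient.map (fun p => (g * p.1, p.2))
    (by rintro p q ⟨h, h1, h2⟩; exact ⟨h, by dsimp only; rw [h1, mul_assoc], h2⟩)
  one_smul x := by
    induction x using Quotient.ind
    exact congrArg (Quotient.mk _) (by simp)
  mul_smul g g' x := by
    induction x using Quotient.ind
    exact congrArg (Quotient.mk _) (by simp [mul_assoc])

lemma indSmul_mk (φ : H →* G) (S : GOrb H) (g : G) (p : G × S.α) :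
    g • (Quotient.mk (indSetoid φ S) p) = Quotient.mk _ (g * p.1, p.2) := rfl

/-- The induced transitive `G`-set `G ×_φ S`. -/
def indObj (φ : H →* G) (S : GOrb H) : GOrb G where
  α := Quotient (indSetoid φ S)
  pretrans := by
    refine ⟨fun x y => ?_⟩
    induction x using Quotient.ind with | _ p =>
    induction y using Quotient.ind with | _ q =>
    obtain ⟨h, hh⟩ := S.pretrans.exists_smul_eq p.2 q.2
    refine ⟨(q.1 * φ h) * p.1⁻¹, ?_⟩
    rw [indSmul_mk]
    refine Quotient.sound ?_
    exact ⟨h, by dsimp only; rw [inv_mul_cancel_right], by dsimp only; rw [hh]⟩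
  nonempty := ⟨Quotient.mk _ (1, S.nonempty.some)⟩

/-- The induction functor on morphisms. -/
def indMap (φ : H →* G) {S T : GOrb H} (f : S ⟶ T) : indObj φ S ⟶ indObj φ T where
  toFun := Quotient.map (fun p => (p.1, f.toFun p.2))
    (by rintro p q ⟨h, h1, h2⟩; exact ⟨h, h1, by dsimp only; rw [h2, f.map_smul]⟩)
  map_smul := by
    rintro g ⟨p⟩
    rfl

/-- The induction functor `G ×_φ - : HOrb ⥤ GOrb` of a group homomorphism `φ : H → G`. -/
def indOrb (φ : H →* G) : GOrb H ⥤ GOrb G where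
  obj := indObj φ
  map := indMap φ
  map_id S := OrbHom.ext (funext (by rintro ⟨p⟩; rfl))
  map_comp f g := OrbHom.ext (funext (by rintro ⟨p⟩; rfl))

/-- The restriction functor `res_φ : PSh(GOrb) ⥤ PSh(HOrb)`, precomposition with the
induction functor. -/
def resPsh (φ : H →* G) : PSh G ⥤ PSh H :=
  (Functor.whiskeringLeft (GOrb H)ᵒᵖ (GOrb G)ᵒᵖ (Type u)).obj (indOrb φ).op

end FJ

namespace FJ

variable {G : Type u} [Group G] {M : Type v'} [Category.{w'} M]

/-- The relative assembly map
`colim_{G_{𝓕'}Orb} F ⟶ colim_{G_𝓕Orb} F` induced by an inclusion `𝓕' ⊆ 𝓕` of families. -/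
noncomputable def relAsm (𝓕' 𝓕 : SubgroupFamily G)
    (hsub : ∀ S : Subgroup G, S ∈ 𝓕'.carrier → S ∈ 𝓕.carrier) (F : GOrb G ⥤ M)
    [HasColimit (ObjectProperty.ι _ ⋙ F : FamOrb G 𝓕' ⥤ M)]
    [HasColimit (ObjectProperty.ι _ ⋙ F : FamOrb G 𝓕 ⥤ M)] :
    colimit (ObjectProperty.ι _ ⋙ F : FamOrb G 𝓕' ⥤ M) ⟶
      colimit (ObjectProperty.ι _ ⋙ F : FamOrb G 𝓕 ⥤ M) :=
  colimit.desc _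
    { pt := colimit (ObjectProperty.ι _ ⋙ F : FamOrb G 𝓕 ⥤ M)
      ι :=
        { app := fun X => colimit.ι (ObjectProperty.ι _ ⋙ F : FamOrb G 𝓕 ⥤ M)
            ⟨X.obj, fun x => hsub _ (X.property x)⟩
          naturality := fun X Y f => by
            dsimp
            rw [Category.comp_id]
            exact colimit.w (ObjectProperty.ι _ ⋙ F : FamOrb G 𝓕 ⥤ M)
              (show (⟨X.obj, fun x => hsub _ (X.property x)⟩ : FamOrb G 𝓕) ⟶
                ⟨Y.obj, fun x => hsub _ (Y.property x)⟩ from ObjectProperty.homMk f.hom) } }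

end FJ

/-!
The relative assembly map is `colimit.pre` along the inclusion `G_𝓕'Orb ⥤ G_𝓕Orb`, so it is
an isomorphism once `FC_G`, restricted to `G_𝓕Orb`, is a pointwise left Kan extension of its
restriction to `G_𝓕'Orb`. At an orbit `X` with base point `x0` and stabilizer `H ∈ 𝓕`,
induction `G ×_H -` is an equivalence from `H_{𝓕'|_H}Orb` onto the comma category
`G_𝓕'Orb ↓ X` (its inverse takes the fibre over `x0`), and it carries the Kan extension cocone
at `X` to the assembly cocone of `FC_G ∘ (G ×_H -)`. Finally `C_G ∘ (G ×_H -)` is a left Kan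
extension of `res^G_H C`, because induction also identifies the comma categories `BH ↓ T` and
`BG ↓ (G ×_H T)`; hence the hypothesis applies to it.
-/

namespace FJ

open MulAction Functor

lemma isIso_colimit_pre_of_isLeftKanExtension {A B M : Type*} [Category A] [Category B]
    [Category M] (ι : A ⥤ B) (D : B ⥤ M) [HasColimit D] [HasColimit (ι ⋙ D)]
    [D.IsLeftKanExtension (𝟙 (ι ⋙ D))] : IsIso (colimit.pre D ι) := by
  have : colimit.pre D ι = (D.colimitIsoOfIsLeftKanExtension (𝟙 (ι ⋙ D))).inv :=
    colimit.hom_ext fun a => by simp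
  rw [this]
  infer_instance

section Orbits

variable {G : Type u} [Group G]

lemma OrbHom.isIso_of_bijective {X Y : GOrb G} (f : X ⟶ Y) (hf : Function.Bijective f.toFun) :
    IsIso f := by
  let e := Equiv.ofBijective _ hf
  refine ⟨⟨⟨e.symm, fun g y => e.injective ?_⟩, OrbHom.ext (funext e.symm_apply_apply),
    OrbHom.ext (funext e.apply_symm_apply)⟩⟩
  change e (e.symm (g • y)) = f.toFun (g • e.symm y)
  rw [f.map_smul]
  exact (e.apply_symm_apply _).trans (congrArg (g • ·) (e.apply_symm_apply y).symm)

lemma selfOrb_hom_apply {X : GOrb G} (f : selfOrb G ⟶ X) (a : G) :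
    f.toFun a = a • f.toFun 1 := by
  simpa [smul_eq_mul] using f.map_smul a 1

end Orbits

section Induction

variable {G H : Type u} [Group G] [Group H] (φ : H →* G) {S T : GOrb H}

def indMk (g : G) (t : S.α) : (indObj φ S).α := Quotient.mk (indSetoid φ S) (g, t)

variable {φ}

@[elab_as_elim]
lemma indObj_induction {motive : (indObj φ S).α → Prop} (h : ∀ g t, motive (indMk φ g t))
    (z : (indObj φ S).α) : motive z :=
  Quotient.ind (fun p => h p.1 p.2) z

lemma indMk_surjective (z : (indObj φ S).α) : ∃ g t, indMk φ g t = z := by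
  induction z using indObj_induction with
  | h g t => exact ⟨g, t, rfl⟩

lemma indMk_eq_indMk_iff {g g' : G} {t t' : S.α} :
    indMk φ g t = indMk φ g' t' ↔ ∃ h : H, g = g' * φ h ∧ t' = h • t :=
  Quotient.eq

lemma indMk_mul_map (g : G) (h : H) (t : S.α) : indMk φ (g * φ h) t = indMk φ g (h • t) :=
  indMk_eq_indMk_iff.2 ⟨h, rfl, rfl⟩

lemma smul_indMk (a g : G) (t : S.α) : a • indMk φ g t = indMk φ (a * g) t := rfl

lemma indMk_one_injective (hφ : Function.Injective φ) :
    Function.Injective (indMk φ (S := S) 1) := fun t t' htt' => by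
  obtain ⟨h, h1, rfl⟩ := indMk_eq_indMk_iff.1 htt'
  rw [one_mul, eq_comm, ← map_one φ] at h1
  rw [hφ h1, one_smul]

lemma indMap_injective (hφ : Function.Injective φ) :
    Function.Injective (indMap φ : (S ⟶ T) → _) := fun _ _ hff' =>
  OrbHom.ext (funext fun t =>
    indMk_one_injective hφ (congrArg (OrbHom.toFun · (indMk φ 1 t)) hff'))

lemma stabilizer_indMk (g : G) (t : S.α) :
    stabilizer G (indMk φ g t) = ((stabilizer H t).map φ).map (MulAut.conj g).toMonoidHom := by
  ext k
  simp only [mem_stabilizer_iff, smul_indMk, indMk_eq_indMk_iff, Subgroup.mem_map]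
  constructor
  · rintro ⟨h, hk, ht⟩
    exact ⟨φ h, ⟨h, ht.symm, rfl⟩, by simp [MulAut.conj_apply, ← hk]⟩
  · rintro ⟨_, ⟨h, ht, rfl⟩, rfl⟩
    exact ⟨h, by simp [MulAut.conj_apply, mul_assoc], ht.symm⟩

lemma stabilizer_mem_of_indObj (𝓕 : SubgroupFamily G)
    (hS : ∀ t : S.α, stabilizer H t ∈ (comapFam φ 𝓕).carrier) (z : (indObj φ S).α) :
    stabilizer G z ∈ 𝓕.carrier := by
  induction z using indObj_induction with
  | h g t => exact stabilizer_indMk g t ▸ 𝓕.conj_mem _ g (hS t)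

end Induction

section Projection

variable {G : Type u} [Group G] {X : GOrb G} (x0 : X.α)

def indProj (T : GOrb (stabilizer G x0)) : indObj (stabilizer G x0).subtype T ⟶ X where
  toFun := Quotient.lift (fun p => p.1 • x0) (by
    rintro p q ⟨h, hpq, -⟩
    simp only [hpq, Subgroup.subtype_apply, mul_smul, mem_stabilizer_iff.1 h.2])
  map_smul a := Quotient.ind fun p => mul_smul a p.1 x0

variable {x0}

lemma indProj_indMk {T : GOrb (stabilizer G x0)} (g : G) (t : T.α) :
    (indProj x0 T).toFun (indMk _ g t) = g • x0 := rfl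

lemma indMap_comp_indProj {T T' : GOrb (stabilizer G x0)} (f : T ⟶ T') :
    indMap _ f ≫ indProj x0 T' = indProj x0 T :=
  OrbHom.ext (funext fun z => by induction z using indObj_induction with | h g t => rfl)

lemma exists_indMk_one_of_indProj_eq {T : GOrb (stabilizer G x0)}
    {z : (indObj (stabilizer G x0).subtype T).α} (hz : (indProj x0 T).toFun z = x0) :
    ∃ t, indMk _ 1 t = z := by
  induction z using indObj_induction with
  | h g t =>
    exact ⟨(⟨g, hz⟩ : stabilizer G x0) • t, by rw [← indMk_mul_map, one_mul]; rfl⟩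

lemma indProj_pt_bijective : Function.Bijective (indProj x0 (GOrb.pt (stabilizer G x0))).toFun := by
  refine ⟨fun z z' hzz' => ?_, fun x => ?_⟩
  · induction z using indObj_induction with | h g t =>
    induction z' using indObj_induction with | h g' t' =>
    have hg : g'⁻¹ * g ∈ stabilizer G x0 := by
      rw [mem_stabilizer_iff, mul_smul, inv_smul_eq_iff]
      exact hzz'
    exact indMk_eq_indMk_iff.2 ⟨⟨_, hg⟩, by simp, rfl⟩
  · obtain ⟨g, hg⟩ := X.pretrans.exists_smul_eq x0 x
    exact ⟨indMk _ g PUnit.unit, hg⟩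

end Projection

section Fibre

variable {G : Type u} [Group G] {A X : GOrb G} (e : A ⟶ X) (x0 : X.α)

instance fibreAction : MulAction (stabilizer G x0) {a : A.α // e.toFun a = x0} where
  smul h a := ⟨(h : G) • a.1, by rw [e.map_smul, a.2]; exact h.2⟩
  one_smul a := Subtype.ext (one_smul G a.1)
  mul_smul h h' a := Subtype.ext (mul_smul (h : G) h' a.1)

def fibreOrb : GOrb (stabilizer G x0) where
  α := {a : A.α // e.toFun a = x0}
  pretrans := ⟨fun a b => by
    obtain ⟨g, hg⟩ := A.pretrans.exists_smul_eq a.1 b.1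
    have hgx : g • x0 = x0 := by rw [← a.2, ← e.map_smul, hg, b.2, a.2]
    exact ⟨⟨g, hgx⟩, Subtype.ext hg⟩⟩
  nonempty := by
    obtain ⟨a⟩ := A.nonempty
    obtain ⟨g, hg⟩ := X.pretrans.exists_smul_eq (e.toFun a) x0
    exact ⟨⟨g • a, by rw [e.map_smul, hg]⟩⟩

lemma fibreOrb_smul_coe (h : stabilizer G x0) (a : (fibreOrb e x0).α) :
    (h • a).1 = (h : G) • a.1 := rfl

lemma stabilizer_fibreOrb_le (a : (fibreOrb e x0).α) :
    (stabilizer (stabilizer G x0) a).map (stabilizer G x0).subtype ≤ stabilizer G a.1 := by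
  rintro _ ⟨h, hh, rfl⟩
  exact congrArg Subtype.val (mem_stabilizer_iff.1 hh)

def indFibre : indObj (stabilizer G x0).subtype (fibreOrb e x0) ⟶ A where
  toFun := Quotient.lift (fun p => p.1 • p.2.1) (by
    rintro p q ⟨h, hpq, hqp⟩
    rw [hpq, hqp, Subgroup.subtype_apply, mul_smul, fibreOrb_smul_coe])
  map_smul a := Quotient.ind fun p => mul_smul a p.1 p.2.1

lemma indFibre_comp : indFibre e x0 ≫ e = indProj x0 (fibreOrb e x0) :=
  OrbHom.ext (funext fun z => by
    induction z using indObj_induction with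
    | h g a => exact (e.map_smul g a.1).trans (congrArg (g • ·) a.2))

lemma indFibre_bijective : Function.Bijective (indFibre e x0).toFun := by
  refine ⟨fun z z' hzz' => ?_, fun a => ?_⟩
  · induction z using indObj_induction with | h g a =>
    induction z' using indObj_induction with | h g' a' =>
    have hx : (indProj x0 _).toFun (indMk _ g a) = (indProj x0 _).toFun (indMk _ g' a') := by
      rw [← indFibre_comp]
      exact congrArg e.toFun hzz'
    have hg : g'⁻¹ * g ∈ stabilizer G x0 := by
      rw [mem_stabilizer_iff, mul_smul, inv_smul_eq_iff]
      exact hx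
    refine indMk_eq_indMk_iff.2 ⟨⟨_, hg⟩, by simp, Subtype.ext ?_⟩
    rw [fibreOrb_smul_coe, mul_smul, eq_inv_smul_iff]
    exact hzz'.symm
  · obtain ⟨g, hg⟩ := X.pretrans.exists_smul_eq (e.toFun a) x0
    refine ⟨indMk _ g⁻¹ ⟨g • a, by rw [e.map_smul, hg]⟩, ?_⟩
    exact inv_smul_smul g a

end Fibre

section LocalEquivalence

variable {G : Type u} [Group G]

lemma exists_indMap_eq {X : GOrb G} {x0 : X.α} {T T' : GOrb (stabilizer G x0)}
    (m : indObj _ T ⟶ indObj _ T') (hm : m ≫ indProj x0 T' = indProj x0 T) :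
    ∃ f : T ⟶ T', indMap _ f = m := by
  have hfib : ∀ t, (indProj x0 T').toFun (m.toFun (indMk _ 1 t)) = x0 := fun t => by
    change (m ≫ indProj x0 T').toFun _ = _
    rw [hm, indProj_indMk, one_smul]
  -- `m` maps the fibre `[1, T]` over `x0` into the fibre `[1, T']`; this defines `f`.
  choose ψ hψ using fun t => exists_indMk_one_of_indProj_eq (hfib t)
  have hm_apply : ∀ g t, m.toFun (indMk _ g t) = indMk _ g (ψ t) := fun g t => by
    rw [← mul_one g, ← smul_indMk, m.map_smul, ← hψ, smul_indMk]
  refine ⟨⟨ψ, fun h t => indMk_one_injective (stabilizer G x0).subtype_injective ?_⟩,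
    OrbHom.ext (funext fun z => ?_)⟩
  · rw [← hm_apply, ← indMk_mul_map, hm_apply, indMk_mul_map]
  · induction z using indObj_induction with
    | h g t => exact (hm_apply g t).symm

variable (𝓕' 𝓕 : SubgroupFamily G)
  (hsub : ∀ S : Subgroup G, S ∈ 𝓕'.carrier → S ∈ 𝓕.carrier)

def famInc : FamOrb G 𝓕' ⥤ FamOrb G 𝓕 :=
  ObjectProperty.ιOfLE fun _ hX x => hsub _ (hX x)

variable (X : FamOrb G 𝓕) (x0 : X.obj.α)

def indOver :
    FamOrb (stabilizer G x0) (comapFam (stabilizer G x0).subtype 𝓕') ⥤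
      CostructuredArrow (famInc 𝓕' 𝓕 hsub) X where
  obj T :=
    { left := ⟨indObj _ T.obj, stabilizer_mem_of_indObj 𝓕' T.property⟩
      right := ⟨⟨⟩⟩
      hom := ObjectProperty.homMk (indProj x0 T.obj) }
  map f := CostructuredArrow.homMk (ObjectProperty.homMk (indMap _ f.hom))
    (ObjectProperty.hom_ext _ (indMap_comp_indProj f.hom))
  map_id T := CostructuredArrow.hom_ext _ _ (ObjectProperty.hom_ext _
    ((indOrb (stabilizer G x0).subtype).map_id T.obj))
  map_comp f g := CostructuredArrow.hom_ext _ _ (ObjectProperty.hom_ext _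
    ((indOrb (stabilizer G x0).subtype).map_comp f.hom g.hom))

instance : (indOver 𝓕' 𝓕 hsub X x0).Faithful where
  map_injective hfg := ObjectProperty.hom_ext _
    (indMap_injective (stabilizer G x0).subtype_injective (congrArg (fun m => m.left.hom) hfg :))

instance : (indOver 𝓕' 𝓕 hsub X x0).Full where
  map_surjective {T T'} m := by
    have hm : m.left.hom ≫ indProj x0 T'.obj = indProj x0 T.obj :=
      congrArg (·.hom) (CostructuredArrow.w m)
    obtain ⟨f, hf⟩ := exists_indMap_eq m.left.hom hm
    exact ⟨ObjectProperty.homMk f, CostructuredArrow.hom_ext _ _ (ObjectProperty.hom_ext _ hf)⟩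

instance : (indOver 𝓕' 𝓕 hsub X x0).EssSurj where
  mem_essImage Y := by
    obtain ⟨A, e, rfl⟩ := CostructuredArrow.mk_surjective Y
    let e' : A.obj ⟶ X.obj := e.hom
    have hT a : stabilizer _ a ∈ (comapFam (stabilizer G x0).subtype 𝓕').carrier :=
      𝓕'.le_mem _ _ (stabilizer_fibreOrb_le e' x0 a) (A.property a.1)
    have := OrbHom.isIso_of_bijective _ (indFibre_bijective e' x0)
    let θ : indObj _ (fibreOrb e' x0) ≅ A.obj := asIso (indFibre e' x0)
    exact ⟨⟨fibreOrb e' x0, hT⟩, ⟨CostructuredArrow.isoMk (ObjectProperty.isoMk _ θ)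
      (ObjectProperty.hom_ext _ (indFibre_comp e' x0))⟩⟩

instance : (indOver 𝓕' 𝓕 hsub X x0).IsEquivalence where

end LocalEquivalence

section Assembly

variable {G : Type u} [Group G] {M : Type v'} [Category.{w'} M] [HasColimitsOfSize.{u, u + 1} M]
  (𝓕' 𝓕 : SubgroupFamily G)
  (hsub : ∀ S : Subgroup G, S ∈ 𝓕'.carrier → S ∈ 𝓕.carrier) (F' : GOrb G ⥤ M)

lemma relAsm_eq_colimit_pre :
    relAsm 𝓕' 𝓕 hsub F' = colimit.pre (ObjectProperty.ι _ ⋙ F') (famInc 𝓕' 𝓕 hsub) :=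
  colimit.hom_ext fun A => by
    simp only [relAsm, colimit.ι_desc]
    exact (colimit.ι_pre (ObjectProperty.ι _ ⋙ F') (famInc 𝓕' 𝓕 hsub) A).symm

noncomputable def isPointwiseLeftKanExtensionAtOfIsIsoAsm (X : FamOrb G 𝓕) (x0 : X.obj.α)
    (h : IsIso (asm (comapFam (stabilizer G x0).subtype 𝓕')
      (indOrb (stabilizer G x0).subtype ⋙ F'))) :
    (LeftExtension.mk (ObjectProperty.ι _ ⋙ F')
      (𝟙 (famInc 𝓕' 𝓕 hsub ⋙ ObjectProperty.ι _ ⋙ F'))).IsPointwiseLeftKanExtensionAt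
        X := by
  let c :=
    asmCocone (comapFam (stabilizer G x0).subtype 𝓕') (indOrb (stabilizer G x0).subtype ⋙ F')
  have : IsIso ((colimit.isColimit _).desc c) := h
  have := OrbHom.isIso_of_bijective _ (indProj_pt_bijective (x0 := x0))
  -- the vertex `F'(G ×_H pt)` of the assembly cocone is `F' X`, via `G ×_H pt ≅ G/H ≅ X`
  let i := F'.mapIso (asIso (indProj x0 (GOrb.pt _)))
  refine IsColimit.ofWhiskerEquivalence (indOver 𝓕' 𝓕 hsub X x0).asEquivalence
    (IsColimit.ofIsoColimit (r := c) (IsColimit.ofPointIso (colimit.isColimit _))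
      (Cocone.ext i fun T => ?_))
  change F'.map (indMap _ (toPt T.obj)) ≫ F'.map (indProj x0 (GOrb.pt _)) =
    𝟙 _ ≫ F'.map (indProj x0 T.obj)
  rw [← F'.map_comp, indMap_comp_indProj, Category.id_comp]

end Assembly

section InducedComma

variable {G : Type u} [Group G] (H : Subgroup G)

def toIndSelfOrb : selfOrb G ⟶ indObj H.subtype (selfOrb H) where
  toFun g := indMk _ g 1
  map_smul _ _ := rfl

lemma rmul_comp_toIndSelfOrb (h : H) :
    rmul G (H.subtype h) ≫ toIndSelfOrb H = toIndSelfOrb H ≫ indMap _ (rmul H h) :=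
  OrbHom.ext (funext fun g => by
    change indMk _ (g * H.subtype h⁻¹) 1 = indMk _ g (1 * h⁻¹)
    rw [indMk_mul_map, smul_eq_mul, mul_one, one_mul])

def indCostructuredArrow (T : GOrb H) :
    CostructuredArrow (jG H) T ⥤ CostructuredArrow (jG G) (indObj H.subtype T) where
  obj u := CostructuredArrow.mk (Y := (Bhom H.subtype).obj u.left)
    (toIndSelfOrb H ≫ indMap _ u.hom)
  map {u u'} m := CostructuredArrow.homMk ((Bhom H.subtype).map m.left) (by
    change rmul G (H.subtype (un m.left)) ≫ toIndSelfOrb H ≫ indMap _ u'.hom =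
      toIndSelfOrb H ≫ indMap _ u.hom
    rw [← Category.assoc, rmul_comp_toIndSelfOrb, Category.assoc, ← CostructuredArrow.w m]
    exact congrArg (toIndSelfOrb H ≫ ·) ((indOrb H.subtype).map_comp _ _).symm)
  map_id u := CostructuredArrow.hom_ext _ _ ((Bhom H.subtype).map_id u.left)
  map_comp f g := CostructuredArrow.hom_ext _ _ ((Bhom H.subtype).map_comp f.left g.left)

variable (T : GOrb H)

instance : (indCostructuredArrow H T).Faithful where
  map_injective hmm :=
    CostructuredArrow.hom_ext _ _ (Subtype.coe_injective (congrArg CommaMorphism.left hmm))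

instance : (indCostructuredArrow H T).Full where
  map_surjective {u u'} n := by
    let f : selfOrb H ⟶ T := u.hom
    let f' : selfOrb H ⟶ T := u'.hom
    have hn : indMk H.subtype (1 * (un n.left)⁻¹) (f'.toFun 1) = indMk _ 1 (f.toFun 1) :=
      congrArg (fun v : selfOrb G ⟶ indObj H.subtype T => v.toFun 1) (CostructuredArrow.w n)
    obtain ⟨h, hh, hf⟩ := indMk_eq_indMk_iff.1 hn
    have hw : rmul H h⁻¹ ≫ f' = f := OrbHom.ext (funext fun a => by
      change f'.toFun (a * h⁻¹⁻¹) = f.toFun a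
      rw [selfOrb_hom_apply f', selfOrb_hom_apply f, hf, inv_inv, mul_smul])
    refine ⟨CostructuredArrow.homMk (show u.left ⟶ u'.left from (h⁻¹ : H)) hw,
      CostructuredArrow.hom_ext _ _ ?_⟩
    change ((h⁻¹ : H) : G) = un n.left
    rw [one_mul, one_mul, Subgroup.subtype_apply] at hh
    rw [InvMemClass.coe_inv, ← hh, inv_inv]

instance : (indCostructuredArrow H T).EssSurj where
  mem_essImage v := by
    obtain ⟨_, v, rfl⟩ := CostructuredArrow.mk_surjective v
    obtain ⟨g, t, hv⟩ := indMk_surjective (v.toFun (1 : G))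
    let u : selfOrb H ⟶ T := ⟨fun h => h • t, fun a b => mul_smul a b t⟩
    have hw : rmul G g ≫ v = toIndSelfOrb H ≫ indMap _ u := OrbHom.ext (funext fun a => by
      change v.toFun (a * g⁻¹) = indMk _ a ((1 : H) • t)
      rw [selfOrb_hom_apply v, ← hv, smul_indMk, inv_mul_cancel_right, one_smul])
    exact ⟨CostructuredArrow.mk (Y := SingleObj.star H) u,
      ⟨CostructuredArrow.isoMk (asIso (show SingleObj.star G ⟶ _ from g)) hw⟩⟩

instance : (indCostructuredArrow H T).IsEquivalence where

end InducedComma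

section KanExtension

variable {G : Type u} [Group G] (H : Subgroup G) {K : Type v} [Category.{w} K]
  {C : SingleObj G ⥤ K} {CG : GOrb G ⥤ K} (α : C ⟶ jG G ⋙ CG)

def indUnit : Bhom H.subtype ⋙ C ⟶ jG H ⋙ indOrb H.subtype ⋙ CG where
  app x := α.app x ≫ CG.map (toIndSelfOrb H)
  naturality x y h := by
    change C.map (H.subtype (un h)) ≫ α.app y ≫ CG.map (toIndSelfOrb H) =
      (α.app x ≫ CG.map (toIndSelfOrb H)) ≫ CG.map (indMap _ (rmul H (un h)))
    have hCG := congrArg CG.map (rmul_comp_toIndSelfOrb H (un h))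
    rw [CG.map_comp, CG.map_comp] at hCG
    rw [← Category.assoc, α.naturality, Category.assoc, Category.assoc]
    exact congrArg (α.app x ≫ ·) hCG

lemma isLeftKanExtension_indOrb_comp [(jG G).HasPointwiseLeftKanExtension C]
    [CG.IsLeftKanExtension α] : (indOrb H.subtype ⋙ CG).IsLeftKanExtension (indUnit H α) := by
  have hCG := isPointwiseLeftKanExtensionOfIsLeftKanExtension CG α
  refine LeftExtension.IsPointwiseLeftKanExtension.isLeftKanExtension
    (E := LeftExtension.mk _ (indUnit H α)) fun T => ?_
  refine IsColimit.ofIsoColimit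
    ((hCG (indObj _ T)).whiskerEquivalence (indCostructuredArrow H T).asEquivalence)
    (Cocone.ext (Iso.refl _) fun u => ?_)
  change (α.app _ ≫ CG.map (toIndSelfOrb H ≫ indMap _ u.hom)) ≫ 𝟙 _ =
    (α.app _ ≫ CG.map (toIndSelfOrb H)) ≫ CG.map (indMap _ u.hom)
  rw [Category.comp_id, Category.assoc]
  exact congrArg (α.app _ ≫ ·) (CG.map_comp _ _)

end KanExtension

/-- if for every `H ∈ 𝓕` the assembly map `As_{𝓕'|_H, F(res^G_H C)_H}` is an
isomorphism, then the relative assembly map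
`colim_{G_{𝓕'}Orb} FC_G ⟶ colim_{G_𝓕Orb} FC_G` is an isomorphism. -/
theorem statement15 {G : Type u} [Group G] (𝓕' 𝓕 : SubgroupFamily G)
    (hsub : ∀ S : Subgroup G, S ∈ 𝓕'.carrier → S ∈ 𝓕.carrier)
    {K : Type v} [Category.{w} K] [HasColimitsOfSize.{u, u + 1} K]
    {M : Type v'} [Category.{w'} M] [HasColimitsOfSize.{u, u + 1} M]
    (F : K ⥤ M)
    (C : SingleObj G ⥤ K)
    -- `C_G`: a left Kan extension of `C` along `j^G`
    (CG : GOrb G ⥤ K) (α : C ⟶ jG G ⋙ CG) [CG.IsLeftKanExtension α]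
    -- hypothesis: all assembly maps `As_{𝓕'|_H, F(res^G_H C)_H}` for `H ∈ 𝓕` are isomorphisms
    (hyp : ∀ H : Subgroup G, H ∈ 𝓕.carrier →
      ∀ (CH : GOrb ↥H ⥤ K) (αH : Bhom H.subtype ⋙ C ⟶ jG ↥H ⋙ CH),
        CH.IsLeftKanExtension αH →
        IsIso (asm (comapFam H.subtype 𝓕') (CH ⋙ F))) :
    IsIso (relAsm 𝓕' 𝓕 hsub (CG ⋙ F)) := by
  have : HasColimitsOfSize.{u, u} K := hasColimitsOfSizeShrink.{u, u, u, u + 1} K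
  have : (ObjectProperty.ι _ ⋙ CG ⋙ F).IsLeftKanExtension
      (𝟙 (famInc 𝓕' 𝓕 hsub ⋙ ObjectProperty.ι _ ⋙ CG ⋙ F)) :=
    LeftExtension.IsPointwiseLeftKanExtension.isLeftKanExtension (E := LeftExtension.mk _ _)
      fun X => isPointwiseLeftKanExtensionAtOfIsIsoAsm 𝓕' 𝓕 hsub (CG ⋙ F) X
        X.obj.nonempty.some (hyp _ (X.property _) _ _ (isLeftKanExtension_indOrb_comp _ α))
  rw [relAsm_eq_colimit_pre]
  exact isIso_colimit_pre_of_isLeftKanExtension _ _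

end FJ
end

section
/- Let F be a finite group and I a filtered category, and let Γ : I → Grp be a diagram of groups. Then the canonical homomorphisms Γ_i ≀ F → (colim_I Γ) ≀ F, induced by the structure maps of the colimit, exhibit (colim_I Γ) ≀ F as the colimit of the diagram i ↦ Γ_i ≀ F in the category of groups; that is, colim_I (Γ_i ≀ F) ≅ (colim_I Γ) ≀ F. -/
/-!
In a filtered colimit of groups every finite family of elements comes from a single stage: the
images of the stages form a directed family of subgroups, and their join is everything because the
cocone factors through it.

Given a cocone `s` on `i ↦ Γ_i ≀ F`, restricting its legs to the `x`-th coordinate copy of `Γ_i`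
gives for each `x : F` a cocone on `Γ`, hence a map `colim Γ → s.pt`. Computed at a common stage,
the maps for `x ≠ y` commute, so they assemble into a map on `(colim Γ)^F`. Together with the
restriction of the legs to `F`, which does not depend on `i` since `I` is connected, it satisfies
the semidirect product relation and descends to `(colim Γ) ≀ F`. As `F` is finite, every element
of `(colim Γ) ≀ F` comes from some `Γ_i ≀ F`, which gives uniqueness.
-/

open CategoryTheory Limits

universe u v w

noncomputable section

variable (F : Type u) [Group F]

/-- The action of `F` on `F → G` by left translation of the argument: `(σ · f) x = f (σ⁻¹ x)`. -/
def wreathAct (G : Type u) [Group G] : F →* MulAut (F → G) where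
  toFun σ :=
    { toFun := fun f x => f (σ⁻¹ * x)
      invFun := fun f x => f (σ * x)
      left_inv := fun f => by funext x; simp [mul_assoc]
      right_inv := fun f => by funext x; simp [mul_assoc]
      map_mul' := fun f g => rfl }
  map_one' := by ext f x; simp
  map_mul' σ τ := by ext f x; simp [mul_assoc]

/-- The wreath product `G ≀ F := G^F ⋊ F`. -/
def Wreath (G : Type u) [Group G] := (F → G) ⋊[wreathAct F G] F

instance (G : Type u) [Group G] : Group (Wreath F G) :=
  inferInstanceAs (Group ((F → G) ⋊[wreathAct F G] F))

/-- Functoriality of the wreath product: a homomorphism `G →* G'` induces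
`G ≀ F →* G' ≀ F` by postcomposition on `G^F` and the identity on `F`. -/
def wreathMap {G G' : Type u} [Group G] [Group G'] (f : G →* G') :
    Wreath F G →* Wreath F G' :=
  SemidirectProduct.map (MonoidHom.compLeft f F) (MonoidHom.id F)
    (fun σ => by ext g x; rfl)

/-- The wreath product functor `- ≀ F : Grp ⥤ Grp`. -/
def wreathFunctor : GrpCat.{u} ⥤ GrpCat.{u} where
  obj G := GrpCat.of (Wreath F G)
  map {G G'} f := GrpCat.ofHom (wreathMap F f.hom)
  map_id _ := rfl
  map_comp _ _ := rfl

namespace GrpCat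

variable {I : Type v} [Category.{w} I] {Γ : I ⥤ GrpCat.{u}} {t : Cocone Γ}

theorem iSup_range_eq_top_of_isColimit (ht : IsColimit t) :
    (⨆ i, (t.ι.app i).hom.range : Subgroup t.pt) = ⊤ := by
  set S : Subgroup t.pt := ⨆ i, (t.ι.app i).hom.range
  have hmem (i : I) (a : Γ.obj i) : t.ι.app i a ∈ S :=
    Subgroup.mem_iSup_of_mem i ⟨a, rfl⟩
  let s : Cocone Γ :=
    { pt := GrpCat.of S
      ι.app i := GrpCat.ofHom ((t.ι.app i).hom.codRestrict S (hmem i))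
      ι.naturality _ _ f := by ext a; exact Subtype.ext (ConcreteCategory.congr_hom (t.w f) a) }
  have hsection : ht.desc s ≫ GrpCat.ofHom S.subtype = 𝟙 t.pt :=
    ht.hom_ext fun i ↦ by rw [← Category.assoc, ht.fac s i]; rfl
  refine eq_top_iff.2 fun u _ ↦ ?_
  have hu : S.subtype (ht.desc s u) = u := ConcreteCategory.congr_hom hsection u
  exact hu ▸ (ht.desc s u).2

theorem directed_range [IsFilteredOrEmpty I] :
    Directed (α := Subgroup t.pt) (· ≤ ·) fun i ↦ (t.ι.app i).hom.range := by
  intro i j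
  refine ⟨IsFiltered.max i j, ?_, ?_⟩ <;> rintro _ ⟨a, rfl⟩
  · exact ⟨_, ConcreteCategory.congr_hom (t.w (IsFiltered.leftToMax i j)) a⟩
  · exact ⟨_, ConcreteCategory.congr_hom (t.w (IsFiltered.rightToMax i j)) a⟩

theorem exists_app_eq_of_finite [IsFiltered I] (ht : IsColimit t) {ι : Type*} [Finite ι]
    (g : ι → t.pt) : ∃ (i : I) (a : ι → Γ.obj i), ∀ x, (t.ι.app i).hom (a x) = g x := by
  have : Nonempty I := IsFiltered.nonempty
  have hmem (x : ι) : ∃ i, g x ∈ (t.ι.app i).hom.range := by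
    rw [← Subgroup.mem_iSup_of_directed directed_range, iSup_range_eq_top_of_isColimit ht]
    exact Subgroup.mem_top _
  choose k hk using hmem
  obtain ⟨i, hi⟩ := (directed_range (t := t)).finite_le k
  choose a ha using fun x ↦ hi x (hk x)
  exact ⟨i, a, ha⟩

end GrpCat

theorem MonoidHom.compLeft_mulSingle {M N ι : Type*} [MulOneClass M] [MulOneClass N]
    [DecidableEq ι] (f : M →* N) (x : ι) (a : M) :
    f.compLeft ι (Pi.mulSingle x a) = Pi.mulSingle x (f a) :=
  (Pi.mulSingle_op (fun _ ↦ f) (fun _ ↦ map_one f) x a).symm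

theorem SemidirectProduct.map_inl_aut {N G H : Type*} [Group N] [Group G] [Group H]
    {ψ : G →* MulAut N} (f : N ⋊[ψ] G →* H) (g : G) (n : N) :
    f (SemidirectProduct.inl (ψ g n)) =
      f (SemidirectProduct.inr g) * f (SemidirectProduct.inl n) * (f (SemidirectProduct.inr g))⁻¹ := by
  rw [SemidirectProduct.inl_aut, map_mul, map_mul, map_inv, map_inv]

section WreathFunctoriality

variable {G G' : Type u} [Group G] [Group G'] (f : G →* G')

theorem wreathMap_inl (g : F → G) :
    wreathMap F f (SemidirectProduct.inl g) = SemidirectProduct.inl (f.compLeft F g) := rfl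

theorem wreathMap_inr (σ : F) :
    wreathMap F f (SemidirectProduct.inr σ) = SemidirectProduct.inr σ :=
  SemidirectProduct.map_inr _ _ _ σ

theorem wreathAct_compLeft (σ : F) (g : F → G) :
    wreathAct F G' σ (f.compLeft F g) = f.compLeft F (wreathAct F G σ g) := rfl

end WreathFunctoriality

namespace WreathFunctor

variable {I : Type v} [Category.{w} I] {Γ : I ⥤ GrpCat.{u}} {t : Cocone Γ} (ht : IsColimit t)
  (s : Cocone (Γ ⋙ wreathFunctor F))

/-- `s.ι.app i`, typed so that the lemmas about `Wreath` and `SemidirectProduct` apply. -/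
def leg (i : I) : Wreath F (Γ.obj i) →* s.pt := (s.ι.app i).hom

theorem leg_wreathMap {i j : I} (f : i ⟶ j) (w : Wreath F (Γ.obj i)) :
    leg F s j (wreathMap F (Γ.map f).hom w) = leg F s i w :=
  ConcreteCategory.congr_hom (s.w f) w

section Coordinate

variable [DecidableEq F]

def coordCocone (x : F) : Cocone Γ where
  pt := s.pt
  ι.app i := GrpCat.ofHom
    ((leg F s i).comp (SemidirectProduct.inl.comp (MonoidHom.mulSingle (fun _ : F ↦ Γ.obj i) x)))
  ι.naturality i j f := by
    ext a
    have h := leg_wreathMap F s f (SemidirectProduct.inl (Pi.mulSingle x a))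
    rw [wreathMap_inl, MonoidHom.compLeft_mulSingle] at h
    exact h

def coordDesc (x : F) : t.pt →* s.pt := (ht.desc (coordCocone F s x)).hom

theorem coordDesc_app (x : F) (i : I) (a : Γ.obj i) :
    coordDesc F ht s x ((t.ι.app i).hom a) =
      leg F s i (SemidirectProduct.inl (Pi.mulSingle x a)) :=
  ConcreteCategory.congr_hom (ht.fac (coordCocone F s x) i) a

end Coordinate

variable [IsFiltered I]

include ht in
theorem exists_wreathMap_eq [Finite F] (w : Wreath F t.pt) :
    ∃ (i : I) (w' : Wreath F (Γ.obj i)), wreathMap F (t.ι.app i).hom w' = w := by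
  obtain ⟨i, a, ha⟩ := GrpCat.exists_app_eq_of_finite ht w.left
  exact ⟨i, ⟨a, w.right⟩, SemidirectProduct.ext (funext ha) rfl⟩

def topDesc : F →* s.pt :=
  (leg F s (IsFiltered.nonempty (C := I)).some).comp SemidirectProduct.inr

theorem leg_inr (i : I) (σ : F) : leg F s i (SemidirectProduct.inr σ) = topDesc F s σ := by
  have := IsFilteredOrEmpty.isPreconnected I
  refine DFunLike.congr_fun (constant_of_preserves_morphisms
    (fun i ↦ (leg F s i).comp SemidirectProduct.inr) (fun i j f ↦ ?_) _ _) σ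
  ext σ
  have h := leg_wreathMap F s f (SemidirectProduct.inr σ)
  rw [wreathMap_inr] at h
  exact h.symm

variable [DecidableEq F]

theorem commute_coordDesc :
    Pairwise fun x y : F ↦ ∀ u v : t.pt, Commute (coordDesc F ht s x u) (coordDesc F ht s y v) := by
  intro x y hxy u v
  obtain ⟨i, a, ha⟩ := GrpCat.exists_app_eq_of_finite ht ![u, v]
  have hu : (t.ι.app i).hom (a 0) = u := ha 0
  have hv : (t.ι.app i).hom (a 1) = v := ha 1
  rw [← hu, ← hv, coordDesc_app, coordDesc_app]
  exact ((Pi.mulSingle_commute hxy _ _).map SemidirectProduct.inl).map (leg F s i)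

variable [Fintype F]

def baseDesc : (F → t.pt) →* s.pt :=
  MonoidHom.noncommPiCoprod (coordDesc F ht s) (commute_coordDesc F ht s)

theorem baseDesc_compLeft (i : I) (g : F → Γ.obj i) :
    baseDesc F ht s ((t.ι.app i).hom.compLeft F g) = leg F s i (SemidirectProduct.inl g) := by
  suffices (baseDesc F ht s).comp ((t.ι.app i).hom.compLeft F) =
      (leg F s i).comp SemidirectProduct.inl from DFunLike.congr_fun this g
  refine MonoidHom.pi_ext fun x a ↦ ?_
  rw [MonoidHom.comp_apply, MonoidHom.compLeft_mulSingle, baseDesc,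
    MonoidHom.noncommPiCoprod_mulSingle, coordDesc_app]
  rfl

theorem baseDesc_wreathAct (σ : F) :
    (baseDesc F ht s).comp (wreathAct F t.pt σ).toMonoidHom =
      (MulAut.conj (topDesc F s σ)).toMonoidHom.comp (baseDesc F ht s) := by
  ext g
  obtain ⟨i, a, ha⟩ := GrpCat.exists_app_eq_of_finite ht g
  obtain rfl : (t.ι.app i).hom.compLeft F a = g := funext ha
  calc baseDesc F ht s (wreathAct F t.pt σ ((t.ι.app i).hom.compLeft F a))
      = leg F s i (SemidirectProduct.inl (wreathAct F (Γ.obj i) σ a)) := by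
        rw [wreathAct_compLeft, baseDesc_compLeft]
    _ = leg F s i (SemidirectProduct.inr σ) * leg F s i (SemidirectProduct.inl a) *
          (leg F s i (SemidirectProduct.inr σ))⁻¹ :=
        SemidirectProduct.map_inl_aut (leg F s i) σ a
    _ = topDesc F s σ * baseDesc F ht s ((t.ι.app i).hom.compLeft F a) * (topDesc F s σ)⁻¹ := by
        rw [leg_inr, baseDesc_compLeft]

def desc : Wreath F t.pt →* s.pt :=
  SemidirectProduct.lift (baseDesc F ht s) (topDesc F s) (baseDesc_wreathAct F ht s)

theorem desc_inl (g : F → t.pt) :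
    desc F ht s (SemidirectProduct.inl g) = baseDesc F ht s g :=
  SemidirectProduct.lift_inl _ _ _ g

theorem desc_inr (σ : F) : desc F ht s (SemidirectProduct.inr σ) = topDesc F s σ :=
  SemidirectProduct.lift_inr _ _ _ σ

theorem desc_comp_wreathMap (i : I) :
    (desc F ht s).comp (wreathMap F (t.ι.app i).hom) = leg F s i := by
  apply SemidirectProduct.hom_ext <;> ext x
  · show desc F ht s (wreathMap F _ (SemidirectProduct.inl x)) = _
    rw [wreathMap_inl, desc_inl, baseDesc_compLeft]
    rfl
  · show desc F ht s (wreathMap F _ (SemidirectProduct.inr x)) = _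
    rw [wreathMap_inr, desc_inr, ← leg_inr F s i]
    rfl

def isColimitMapCocone : IsColimit ((wreathFunctor F).mapCocone t) where
  desc s := GrpCat.ofHom (desc F ht s)
  fac s i := GrpCat.hom_ext (desc_comp_wreathMap F ht s i)
  uniq s m hm := GrpCat.hom_ext <| MonoidHom.ext fun w ↦ by
    obtain ⟨i, w, rfl⟩ := exists_wreathMap_eq F ht w
    exact (ConcreteCategory.congr_hom (hm i) w).trans
      (DFunLike.congr_fun (desc_comp_wreathMap F ht s i) w).symm

end WreathFunctor

theorem statement19 [Finite F] {I : Type v} [Category.{w} I] [IsFiltered I]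
    (Γ : I ⥤ GrpCat.{u}) (t : Cocone Γ) (ht : IsColimit t) :
    Nonempty (IsColimit ((wreathFunctor F).mapCocone t)) := by
  classical
  have := Fintype.ofFinite F
  exact ⟨WreathFunctor.isColimitMapCocone F ht⟩

end
end
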